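/- In the fully confounded observational setting, the relative treatment effect φ = P(Y(1) > Y(0)) − P(Y(1) < Y(0)) satisfies p_{00} + p_{1(K−1)} − 1 ≤ φ ≤ 1 − p_{10} − p_{0(K−1)}, where p_{xy} = P(X = x, Y(X) = y). -/
import Mathlib


open MeasureTheory

lemma stmt8_aux {Ω : Type*} [MeasurableSpace Ω] (P : Measure Ω) [IsProbabilityMeasure P]
    {A B E : Set Ω} (hA : MeasurableSet A) (hB : MeasurableSet B) (hd : Disjoint A B)
    (hE : E ⊆ (A ∪ B)ᶜ) :
    (P E).toReal + (P A).toReal + (P B).toReal ≤ 1 := by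
  have h : P E + (P A + P B) ≤ 1 := by
    rw [← measure_union hd hB]
    calc P E + P (A ∪ B) ≤ P (A ∪ B)ᶜ + P (A ∪ B) :=
          add_le_add (measure_mono hE) le_rfl
      _ = 1 := by
          rw [add_comm, measure_add_measure_compl (hA.union hB), measure_univ]
  have h2 := ENNReal.toReal_mono (by norm_num) h
  rw [ENNReal.toReal_add (measure_ne_top P E) (by finiteness),
    ENNReal.toReal_add (measure_ne_top P A) (measure_ne_top P B)] at h2
  simpa [add_assoc] using h2

/-- Confounded setting: p_{00} + p_{1(K−1)} − 1 ≤ φ ≤ 1 − p_{10} − p_{0(K−1)}. -/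
theorem stmt8 {Ω : Type*} [MeasurableSpace Ω] (P : Measure Ω) [IsProbabilityMeasure P]
    {K : ℕ} (hK : 1 ≤ K) (X : Ω → Fin 2) (Y : Fin 2 → Ω → Fin K)
    (hX : Measurable X) (hY : ∀ x, Measurable (Y x)) :
    (P {ω | X ω = 0 ∧ Y (X ω) ω = ⟨0, hK⟩}).toReal
      + (P {ω | X ω = 1 ∧ Y (X ω) ω = ⟨K - 1, by omega⟩}).toReal - 1
      ≤ (P {ω | Y 0 ω < Y 1 ω}).toReal - (P {ω | Y 1 ω < Y 0 ω}).toReal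
    ∧ (P {ω | Y 0 ω < Y 1 ω}).toReal - (P {ω | Y 1 ω < Y 0 ω}).toReal ≤
      1 - (P {ω | X ω = 1 ∧ Y (X ω) ω = ⟨0, hK⟩}).toReal
        - (P {ω | X ω = 0 ∧ Y (X ω) ω = ⟨K - 1, by omega⟩}).toReal := by
  have hrw : ∀ (x : Fin 2) (c : Fin K),
      {ω | X ω = x ∧ Y (X ω) ω = c} = X ⁻¹' {x} ∩ Y x ⁻¹' {c} := by
    intro x c
    ext ω
    simp only [Set.mem_setOf_eq, Set.mem_inter_iff, Set.mem_preimage, Set.mem_singleton_iff]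
    constructor
    · rintro ⟨h1, h2⟩; rw [h1] at h2; exact ⟨h1, h2⟩
    · rintro ⟨h1, h2⟩; exact ⟨h1, by rw [h1]; exact h2⟩
  have hmeas : ∀ (x : Fin 2) (c : Fin K),
      MeasurableSet {ω | X ω = x ∧ Y (X ω) ω = c} := by
    intro x c
    rw [hrw]
    exact (hX (measurableSet_singleton x)).inter ((hY x) (measurableSet_singleton c))
  have hdisj : ∀ (c d : Fin K),
      Disjoint {ω | X ω = 0 ∧ Y (X ω) ω = c} {ω | X ω = 1 ∧ Y (X ω) ω = d} := by
    intro c d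
    rw [Set.disjoint_left]
    rintro ω ⟨h0, _⟩ ⟨h1, _⟩
    rw [h0] at h1
    exact absurd h1 (by decide)
  constructor
  · have key := stmt8_aux P (hmeas 0 ⟨0, hK⟩) (hmeas 1 ⟨K - 1, by omega⟩)
      (hdisj _ _) (E := {ω | Y 1 ω < Y 0 ω}) ?_
    · have hnn : 0 ≤ (P {ω | Y 0 ω < Y 1 ω}).toReal := ENNReal.toReal_nonneg
      linarith
    · intro ω hω
      simp only [Set.mem_compl_iff, Set.mem_union, Set.mem_setOf_eq] at hω ⊢
      rintro (⟨h0, hy⟩ | ⟨h1, hy⟩)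
      · rw [h0] at hy
        have : (Y 1 ω).val < 0 := by simpa [hy, Fin.lt_def] using hω
        omega
      · rw [h1] at hy
        have h2 := (Y 0 ω).isLt
        have : K - 1 < (Y 0 ω).val := by simpa [hy, Fin.lt_def] using hω
        omega
  · have key := stmt8_aux P (hmeas 1 ⟨0, hK⟩) (hmeas 0 ⟨K - 1, by omega⟩)
      (hdisj _ _).symm (E := {ω | Y 0 ω < Y 1 ω}) ?_
    · have hnn : 0 ≤ (P {ω | Y 1 ω < Y 0 ω}).toReal := ENNReal.toReal_nonneg
      linarith
    · intro ω hω
      simp only [Set.mem_compl_iff, Set.mem_union, Set.mem_setOf_eq] at hω ⊢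
      rintro (⟨h1, hy⟩ | ⟨h0, hy⟩)
      · rw [h1] at hy
        have : (Y 0 ω).val < 0 := by simpa [hy, Fin.lt_def] using hω
        omega
      · rw [h0] at hy
        have h2 := (Y 1 ω).isLt
        have : K - 1 < (Y 1 ω).val := by simpa [hy, Fin.lt_def] using hω
        omega
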